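/- Let H be a d×d complex Hermitian matrix with spectral decomposition H = Σ_{i=1}^M λ_i Π_i (eigenvalues ordered increasingly, nonzero pairwise-orthogonal Hermitian projections summing to the identity), and let β ≥ 0. For every α ∈ (0,1) ∪ (1,∞), the Petz–Rényi relative entropy of order α between Π_1/d_G and e^{−βH}/Tr[e^{−βH}], namely (1/(α−1))·ln( d_G^{−α} · (Tr[e^{−βH}])^{α−1} · Tr[Π_1 · e^{−β(1−α)H}] ), equals βλ_1 − ln d_G + ln Tr[e^{−βH}] (the quantum relative entropy of the same pair), independently of α. Here d_G := Tr[Π_1]. -/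

import Mathlib

open Matrix
open scoped ComplexOrder


lemma pow_spectral {d M : ℕ} (μ : Fin M → ℂ) (P : Fin M → Matrix (Fin d) (Fin d) ℂ)
    (hPorth : ∀ i j, P i * P j = if i = j then P i else 0)
    (hPsum : ∑ i, P i = 1) (n : ℕ) :
    (∑ i, μ i • P i) ^ n = ∑ i, (μ i) ^ n • P i := by
  induction n with
  | zero => simpa using hPsum.symm
  | succ n ih =>
      rw [pow_succ, ih, Finset.sum_mul_sum]
      refine Finset.sum_congr rfl fun i _ => ?_
      rw [Fintype.sum_eq_single i (fun j hj => ?_)]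
      · rw [smul_mul_smul_comm, hPorth, if_pos rfl, pow_succ]
      · rw [smul_mul_smul_comm, hPorth, if_neg (Ne.symm hj), smul_zero]

lemma exp_spectral {d M : ℕ} (μ : Fin M → ℂ) (P : Fin M → Matrix (Fin d) (Fin d) ℂ)
    (hPorth : ∀ i j, P i * P j = if i = j then P i else 0)
    (hPsum : ∑ i, P i = 1) :
    NormedSpace.exp (∑ i, μ i • P i) = ∑ i, Complex.exp (μ i) • P i := by
  have hsumm : ∀ i : Fin M, Summable fun n : ℕ => ((Nat.factorial n : ℂ)⁻¹ * μ i ^ n) := by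
    intro i
    simpa [smul_eq_mul] using NormedSpace.expSeries_summable' (𝕂 := ℂ) (μ i)
  rw [NormedSpace.exp_eq_tsum ℂ]
  have h1 : ∀ n : ℕ, ((Nat.factorial n : ℂ)⁻¹ : ℂ) • (∑ i, μ i • P i) ^ n
      = ∑ i, ((Nat.factorial n : ℂ)⁻¹ * μ i ^ n) • P i := by
    intro n
    rw [pow_spectral μ P hPorth hPsum, Finset.smul_sum]
    exact Finset.sum_congr rfl fun i _ => by rw [smul_smul]
  simp only [h1]
  rw [Summable.tsum_finsetSum (fun i _ => (hsumm i).smul_const _)]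
  refine Finset.sum_congr rfl fun i _ => ?_
  rw [Summable.tsum_smul_const (hsumm i), Complex.exp_eq_exp_ℂ, NormedSpace.exp_eq_tsum ℂ]
  simp [smul_eq_mul]

/-- the Petz–Rényi relative entropy of order `α` between `Π₁/d_G` and the
thermal state equals the quantum relative entropy `βλ₁ - ln d_G + ln Tr[e^{-βH}]`,
independently of `α ∈ (0,1) ∪ (1,∞)`. -/
theorem petz_renyi_thermal_ground_eq
    {d M : ℕ} (hd : 1 ≤ d) (hM : 2 ≤ M)
    (lam : Fin M → ℝ) (hlam : Monotone lam)
    (P : Fin M → Matrix (Fin d) (Fin d) ℂ)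
    (hPne : ∀ i, P i ≠ 0)
    (hPherm : ∀ i, (P i).IsHermitian)
    (hPorth : ∀ i j, P i * P j = if i = j then P i else 0)
    (hPsum : ∑ i, P i = 1)
    (H : Matrix (Fin d) (Fin d) ℂ)
    (hH : H = ∑ i, (lam i : ℂ) • P i)
    (i0 : Fin M) (hi0 : i0 = ⟨0, by omega⟩)
    (i1 : Fin M) (hi1 : i1 = ⟨1, by omega⟩)
    (dG : ℕ) (hdGpos : 0 < dG) (hdG : (P i0).trace = (dG : ℂ))
    (β : ℝ) (hβ : 0 ≤ β)
    (α : ℝ) (hα : α ∈ Set.Ioo (0 : ℝ) 1 ∪ Set.Ioi (1 : ℝ)) :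
    (1 / (α - 1)) * Real.log ((dG : ℝ) ^ (-α) *
        ((NormedSpace.exp ((-(β : ℂ)) • H)).trace.re) ^ (α - 1) *
        ((P i0 * NormedSpace.exp ((-((β : ℂ) * (1 - (α : ℂ)))) • H)).trace.re)) =
      β * lam i0 - Real.log (dG : ℝ) + Real.log ((NormedSpace.exp ((-(β : ℂ)) • H)).trace.re) := by
  have hne : α - 1 ≠ 0 := by
    rcases hα with h | h
    · exact ne_of_lt (by linarith [h.2])
    · exact ne_of_gt (by simpa [Set.mem_Ioi] using sub_pos.2 (Set.mem_Ioi.mp h))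
  -- exp of scalar multiples of H
  have hexp : ∀ r : ℝ, NormedSpace.exp ((r : ℂ) • H)
      = ∑ i, Complex.exp ((r * lam i : ℝ) : ℂ) • P i := by
    intro r
    have h2 : (r : ℂ) • H = ∑ i, ((r * lam i : ℝ) : ℂ) • P i := by
      rw [hH, Finset.smul_sum]
      refine Finset.sum_congr rfl fun i _ => ?_
      rw [smul_smul]; push_cast; ring_nf
    rw [h2, exp_spectral _ P hPorth hPsum]
  -- traces of the projections are positive reals
  have htr : ∀ i : Fin M, ∃ t : ℝ, 0 < t ∧ (P i).trace = (t : ℂ) := by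
    intro i
    refine ⟨∑ j, ∑ k, Complex.normSq (P i j k), ?_, ?_⟩
    · obtain ⟨j, k, hjk⟩ : ∃ j k, P i j k ≠ 0 := by
        by_contra h; push_neg at h
        exact hPne i (by ext j k; simpa using h j k)
      refine Finset.sum_pos'
        (fun j _ => Finset.sum_nonneg fun k _ => Complex.normSq_nonneg _)
        ⟨j, Finset.mem_univ j, Finset.sum_pos'
          (fun k _ => Complex.normSq_nonneg _)
          ⟨k, Finset.mem_univ k, Complex.normSq_pos.2 hjk⟩⟩
    · have h2 : P i = P i * P i := by rw [hPorth i i, if_pos rfl]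
      calc (P i).trace = (P i * P i).trace := by rw [← h2]
        _ = ∑ j, ∑ k, P i j k * P i k j := by
              simp [Matrix.trace, Matrix.mul_apply, Matrix.diag]
        _ = ∑ j, ∑ k, ((Complex.normSq (P i j k) : ℝ) : ℂ) := by
              refine Finset.sum_congr rfl fun j _ => Finset.sum_congr rfl fun k _ => ?_
              rw [← (hPherm i).apply k j]
              exact Complex.mul_conj _
        _ = _ := by push_cast; ring
  choose t htpos htr using htr
  haveI : Nonempty (Fin M) := ⟨i0⟩
  -- the thermal trace
  have hβH : (-(β : ℂ)) • H = (((-β : ℝ) : ℂ)) • H := by push_cast; ring_nf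
  have hT : (NormedSpace.exp ((-(β : ℂ)) • H)).trace
      = ((∑ i, Real.exp (-β * lam i) * t i : ℝ) : ℂ) := by
    rw [hβH, hexp (-β), Matrix.trace_sum]
    simp only [Matrix.trace_smul, smul_eq_mul, htr]
    push_cast
    rfl
  set T : ℝ := ∑ i, Real.exp (-β * lam i) * t i with hTdef
  have hTpos : 0 < T :=
    Finset.sum_pos (fun i _ => mul_pos (Real.exp_pos _) (htpos i)) Finset.univ_nonempty
  -- the ground-projection trace
  have hcoef : (-((β : ℂ) * (1 - (α : ℂ)))) • H = (((-(β * (1 - α)) : ℝ) : ℂ)) • H := by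
    push_cast; ring_nf
  have hP0 : (P i0 * NormedSpace.exp ((-((β : ℂ) * (1 - (α : ℂ)))) • H)).trace
      = ((Real.exp (β * (α - 1) * lam i0) * dG : ℝ) : ℂ) := by
    rw [hcoef, hexp _, Finset.mul_sum]
    have h3 : ∀ i : Fin M, P i0 * Complex.exp ((-(β * (1 - α)) * lam i : ℝ) : ℂ) • P i
        = Complex.exp ((-(β * (1 - α)) * lam i : ℝ) : ℂ) • (P i0 * P i) := by
      intro i; rw [Matrix.mul_smul]
    simp only [h3, hPorth]
    rw [Fintype.sum_eq_single i0 (fun j hj => by rw [if_neg (Ne.symm hj), smul_zero]),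
      if_pos rfl, Matrix.trace_smul, hdG, smul_eq_mul]
    push_cast
    congr 2
    ring
  rw [hT, hP0, Complex.ofReal_re, Complex.ofReal_re]
  have hdGR : (0 : ℝ) < (dG : ℝ) := by exact_mod_cast hdGpos
  have h1 : Real.log ((dG : ℝ) ^ (-α) * T ^ (α - 1)
      * (Real.exp (β * (α - 1) * lam i0) * dG))
      = (-α) * Real.log dG + (α - 1) * Real.log T
        + (β * (α - 1) * lam i0 + Real.log dG) := by
    rw [Real.log_mul (by positivity) (by positivity),
      Real.log_mul (by positivity) (by positivity),
      Real.log_mul (by positivity) (by positivity),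
      Real.log_rpow hdGR, Real.log_rpow hTpos, Real.log_exp]
  rw [h1]
  field_simp
  ring
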